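/- arXiv:math/0404395 — 2 statements merged into one kernel-verified Lean document; each statement's English description precedes it below -/
import Mathlib

section
/- Let n ≥ 1 and let a, x ∈ A_n with x doubly pure. Then ã·x = −(a·x)~, i.e. the tilde of the product a·x equals the negative of ã·x. -/
noncomputable section

open scoped Quaternion

/-- The Cayley–Dickson algebra `A n = ℝ^(2^n)` as a type. -/
def CD : ℕ → Type
  | 0 => ℝ
  | n + 1 => CD n × CD n

namespace CD

instance instAddCommGroup : (n : ℕ) → AddCommGroup (CD n)
  | 0 => inferInstanceAs (AddCommGroup ℝ)
  | n + 1 =>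
    letI := instAddCommGroup n
    inferInstanceAs (AddCommGroup (CD n × CD n))

instance instModule : (n : ℕ) → Module ℝ (CD n)
  | 0 => inferInstanceAs (Module ℝ ℝ)
  | n + 1 =>
    letI := instModule n
    inferInstanceAs (Module ℝ (CD n × CD n))

/-- Conjugation in the Cayley–Dickson algebra. -/
def conj : {n : ℕ} → CD n → CD n
  | 0, x => x
  | _ + 1, x => (conj x.1, -x.2)

/-- Cayley–Dickson multiplication. -/
def mul : {n : ℕ} → CD n → CD n → CD n
  | 0, x, y => Mul.mul (α := ℝ) x y
  | _ + 1, x, y =>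
    (mul x.1 y.1 - mul (conj y.2) x.2, mul y.2 x.1 + mul x.2 (conj y.1))

instance instMul (n : ℕ) : Mul (CD n) := ⟨mul⟩

/-- The multiplicative unit `e₀`. -/
def one : {n : ℕ} → CD n
  | 0 => (1 : ℝ)
  | _ + 1 => (one, 0)

instance instOne (n : ℕ) : One (CD n) := ⟨one⟩

/-- The Euclidean inner product on `A n = ℝ^(2^n)`. -/
def inner : {n : ℕ} → CD n → CD n → ℝ
  | 0, x, y => (x * y : ℝ)
  | _ + 1, x, y => inner x.1 y.1 + inner x.2 y.2

/-- The Euclidean norm on `A n = ℝ^(2^n)`. -/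
def norm {n : ℕ} (x : CD n) : ℝ := Real.sqrt (inner x x)

/-- `ã = (-a₂, a₁)`. -/
def tilde {n : ℕ} (a : CD (n + 1)) : CD (n + 1) := (-a.2, a.1)

/-- `ẽ₀ = (0, e₀)`. -/
def etilde (n : ℕ) : CD (n + 1) := ((0 : CD n), (1 : CD n))

/-- An element is pure if its conjugate is its negative. -/
def IsPure {n : ℕ} (a : CD n) : Prop := conj a = -a

/-- An element of `A (n+1)` is doubly pure if both of its coordinates are pure. -/
def IsDoublyPure {n : ℕ} (a : CD (n + 1)) : Prop := IsPure a.1 ∧ IsPure a.2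

/-- The associator `(a,b,c) = (ab)c - a(bc)`. -/
def assoc {n : ℕ} (a b c : CD n) : CD n := a * b * c - a * (b * c)

/-- An element is alternative if `(a,a,x) = 0` for all `x`. -/
def IsAlternative {n : ℕ} (a : CD n) : Prop := ∀ x : CD n, assoc a a x = 0

/-- An element is strongly alternative if `(a,a,x) = 0` and `(a,x,x) = 0` for all `x`. -/
def IsStronglyAlternative {n : ℕ} (a : CD n) : Prop :=
  (∀ x : CD n, assoc a a x = 0) ∧ (∀ x : CD n, assoc a x x = 0)

/-- The pure (imaginary) part of an element. -/
def im {n : ℕ} (a : CD n) : CD n := (2⁻¹ : ℝ) • (a - conj a)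

/-- `H a`, the span of `{e₀, ã, a, ẽ₀}`. -/
def H {n : ℕ} (a : CD (n + 1)) : Submodule ℝ (CD (n + 1)) :=
  Submodule.span ℝ {(1 : CD (n + 1)), tilde a, a, etilde n}

/-- The orthogonal complement of `H a`. -/
def Hperp {n : ℕ} (a : CD (n + 1)) : Set (CD (n + 1)) :=
  {x | ∀ y ∈ H a, inner y x = 0}

end CD

namespace CD

@[simp] theorem fst_neg {n : ℕ} (a : CD (n + 1)) : (-a).1 = -a.1 := rfl

@[simp] theorem snd_neg {n : ℕ} (a : CD (n + 1)) : (-a).2 = -a.2 := rfl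

@[simp] theorem fst_mul {n : ℕ} (a b : CD (n + 1)) : (a * b).1 = a.1 * b.1 - conj b.2 * a.2 :=
  rfl

@[simp] theorem snd_mul {n : ℕ} (a b : CD (n + 1)) : (a * b).2 = b.2 * a.1 + a.2 * conj b.1 :=
  rfl

@[simp] theorem fst_conj {n : ℕ} (a : CD (n + 1)) : (conj a).1 = conj a.1 := rfl

@[simp] theorem snd_conj {n : ℕ} (a : CD (n + 1)) : (conj a).2 = -a.2 := rfl

@[simp] theorem fst_tilde {n : ℕ} (a : CD (n + 1)) : (tilde a).1 = -a.2 := rfl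

@[simp] theorem snd_tilde {n : ℕ} (a : CD (n + 1)) : (tilde a).2 = a.1 := rfl

theorem ext {n : ℕ} {a b : CD (n + 1)} (h₁ : a.1 = b.1) (h₂ : a.2 = b.2) : a = b :=
  Prod.ext h₁ h₂

theorem conj_neg : ∀ {n : ℕ} (a : CD n), conj (-a) = -conj a
  | 0, _ => rfl
  | _ + 1, a => ext (by simp only [fst_conj, fst_neg, conj_neg a.1]) (by simp only [snd_conj, snd_neg])

theorem neg_mul_and_mul_neg : ∀ n : ℕ,
    (∀ a b : CD n, -a * b = -(a * b)) ∧ (∀ a b : CD n, a * -b = -(a * b))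
  | 0 => ⟨fun a b => _root_.neg_mul (α := ℝ) a b, fun a b => _root_.mul_neg (α := ℝ) a b⟩
  | n + 1 => by
    obtain ⟨neg_mul, mul_neg⟩ := neg_mul_and_mul_neg n
    refine ⟨fun a b => ext ?_ ?_, fun a b => ext ?_ ?_⟩ <;>
      simp only [fst_mul, snd_mul, fst_neg, snd_neg, conj_neg, neg_mul, mul_neg] <;> abel

protected theorem neg_mul {n : ℕ} (a b : CD n) : -a * b = -(a * b) :=
  (neg_mul_and_mul_neg n).1 a b

protected theorem mul_neg {n : ℕ} (a b : CD n) : a * -b = -(a * b) :=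
  (neg_mul_and_mul_neg n).2 a b

end CD

/-- For `a, x ∈ A (n+1)` with `x` doubly pure, `ã·x = −(a·x)~`. -/
theorem tilde_mul_eq_neg_tilde_mul (n : ℕ) (a x : CD (n + 1))
    (hx : CD.IsDoublyPure x) :
    CD.tilde a * x = -CD.tilde (a * x) := by
  obtain ⟨hx₁, hx₂⟩ : CD.conj x.1 = -x.1 ∧ CD.conj x.2 = -x.2 := hx
  -- both sides expand to `(x₂ a₁ - a₂ x₁, -(a₁ x₁) - x₂ a₂)`
  refine CD.ext ?_ ?_ <;>
    simp only [CD.fst_mul, CD.snd_mul, CD.fst_tilde, CD.snd_tilde, CD.fst_neg, CD.snd_neg,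
      hx₁, hx₂, CD.neg_mul, CD.mul_neg] <;> abel
end
end

section
/- Let n ≥ 1 and let a, x ∈ A_n be doubly pure. Then ã·x + x̃·a = 0 if and only if ⟨a, x⟩ = 0. -/
noncomputable section

open scoped Quaternion

namespace CDAux

open CD

lemma hmul_def {n : ℕ} (x y : CD n) : x * y = CD.mul x y := rfl

lemma conj_neg : ∀ {n : ℕ} (x : CD n), conj (-x) = -conj x
  | 0, _ => rfl
  | n + 1, x => by
    show ((conj (-x.1), -(-x.2)) : CD n × CD n) = (-(conj x.1), -(-x.2))
    rw [conj_neg x.1]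

lemma conj_conj : ∀ {n : ℕ} (x : CD n), conj (conj x) = x
  | 0, _ => rfl
  | n + 1, x => by
    show ((conj (conj x.1), -(-x.2)) : CD n × CD n) = (x.1, x.2)
    rw [conj_conj x.1, neg_neg]

lemma inner_comm : ∀ {n : ℕ} (x y : CD n), CD.inner x y = CD.inner y x
  | 0, x, y => mul_comm (G := ℝ) x y
  | n + 1, x, y => by
    show CD.inner x.1 y.1 + CD.inner x.2 y.2 = CD.inner y.1 x.1 + CD.inner y.2 x.2
    rw [inner_comm x.1, inner_comm x.2]

lemma inner_neg_neg : ∀ {n : ℕ} (x y : CD n), CD.inner (-x) (-y) = CD.inner x y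
  | 0, x, y => neg_mul_neg (α := ℝ) x y
  | n + 1, x, y => by
    show CD.inner (-x.1) (-y.1) + CD.inner (-x.2) (-y.2)
        = CD.inner x.1 y.1 + CD.inner x.2 y.2
    rw [inner_neg_neg x.1, inner_neg_neg x.2]

lemma inner_conj : ∀ {n : ℕ} (x y : CD n), CD.inner (conj x) (conj y) = CD.inner x y
  | 0, _, _ => rfl
  | n + 1, x, y => by
    show CD.inner (conj x.1) (conj y.1) + CD.inner (-x.2) (-y.2)
        = CD.inner x.1 y.1 + CD.inner x.2 y.2
    rw [inner_conj x.1, inner_neg_neg x.2]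

lemma mul_negs : ∀ {n : ℕ} (u v : CD n),
    CD.mul (-u) v = -CD.mul u v ∧ CD.mul u (-v) = -CD.mul u v
  | 0, u, v => by
    have h : ∀ a b : ℝ, -a * b = -(a * b) ∧ a * -b = -(a * b) := by
      intro a b; constructor <;> ring
    exact h u v
  | n + 1, u, v => by
    constructor
    · show ((CD.mul (-u.1) v.1 - CD.mul (conj v.2) (-u.2),
          CD.mul v.2 (-u.1) + CD.mul (-u.2) (conj v.1)) : CD n × CD n)
        = (-(CD.mul u.1 v.1 - CD.mul (conj v.2) u.2),
           -(CD.mul v.2 u.1 + CD.mul u.2 (conj v.1)))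
      rw [(mul_negs u.1 v.1).1, (mul_negs (conj v.2) u.2).2,
        (mul_negs v.2 u.1).2, (mul_negs u.2 (conj v.1)).1, Prod.mk.injEq]
      constructor <;> abel
    · show ((CD.mul u.1 (-v.1) - CD.mul (conj (-v.2)) u.2,
          CD.mul (-v.2) u.1 + CD.mul u.2 (conj (-v.1))) : CD n × CD n)
        = (-(CD.mul u.1 v.1 - CD.mul (conj v.2) u.2),
           -(CD.mul v.2 u.1 + CD.mul u.2 (conj v.1)))
      rw [conj_neg, conj_neg, (mul_negs u.1 v.1).2, (mul_negs (conj v.2) u.2).1,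
        (mul_negs v.2 u.1).1, (mul_negs u.2 (conj v.1)).2, Prod.mk.injEq]
      constructor <;> abel

lemma mul_conj_add : ∀ {n : ℕ} (x y : CD n),
    CD.mul x (conj y) + CD.mul y (conj x) = (2 * CD.inner x y) • (1 : CD n)
  | 0, x, y => by
    have h : ∀ a b : ℝ, a * b + b * a = (2 * (a * b)) • (1 : ℝ) := by
      intro a b; rw [smul_eq_mul]; ring
    exact h x y
  | n + 1, x, y => by
    have h1 := mul_conj_add x.1 y.1
    have h2 : CD.mul (conj y.2) x.2 + CD.mul (conj x.2) y.2
        = (2 * CD.inner x.2 y.2) • (1 : CD n) := by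
      have h := mul_conj_add (conj y.2) (conj x.2)
      rwa [conj_conj, conj_conj, inner_conj, inner_comm y.2] at h
    show ((CD.mul x.1 (conj y.1) - CD.mul (conj (-y.2)) x.2
          + (CD.mul y.1 (conj x.1) - CD.mul (conj (-x.2)) y.2),
        CD.mul (-y.2) x.1 + CD.mul x.2 (conj (conj y.1))
          + (CD.mul (-x.2) y.1 + CD.mul y.2 (conj (conj x.1)))) : CD n × CD n)
      = ((2 * (CD.inner x.1 y.1 + CD.inner x.2 y.2)) • (1 : CD n),
         (2 * (CD.inner x.1 y.1 + CD.inner x.2 y.2)) • (0 : CD n))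
    rw [Prod.mk.injEq]
    constructor
    · rw [conj_neg, conj_neg, (mul_negs (conj y.2) x.2).1, (mul_negs (conj x.2) y.2).1]
      have hre : CD.mul x.1 (conj y.1) - -CD.mul (conj y.2) x.2
          + (CD.mul y.1 (conj x.1) - -CD.mul (conj x.2) y.2)
          = (CD.mul x.1 (conj y.1) + CD.mul y.1 (conj x.1))
            + (CD.mul (conj y.2) x.2 + CD.mul (conj x.2) y.2) := by abel
      rw [hre, h1, h2, ← add_smul]
      congr 1
      ring
    · rw [conj_conj, conj_conj, (mul_negs y.2 x.1).1, (mul_negs x.2 y.1).1, smul_zero]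
      abel

lemma smul_one_eq_zero_iff : ∀ {n : ℕ} (r : ℝ), r • (1 : CD n) = 0 ↔ r = 0
  | 0, r => by
    have h : ∀ s : ℝ, s • (1 : ℝ) = 0 ↔ s = 0 := by intro s; simp
    exact h r
  | n + 1, r => by
    show ((r • (1 : CD n), r • (0 : CD n)) : CD n × CD n) = (0, 0) ↔ r = 0
    rw [Prod.mk.injEq, smul_one_eq_zero_iff r, smul_zero]
    simp

end CDAux

/-- For doubly pure `a, x`, `ã·x + x̃·a = 0 ↔ ⟨a, x⟩ = 0`. -/
theorem tilde_mul_add_tilde_mul_eq_zero_iff_inner_eq_zero (n : ℕ) (a x : CD (n + 1))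
    (ha : CD.IsDoublyPure a) (hx : CD.IsDoublyPure x) :
    CD.tilde a * x + CD.tilde x * a = 0 ↔ CD.inner a x = 0 := by
  obtain ⟨ha1, ha2⟩ := ha
  obtain ⟨hx1, hx2⟩ := hx
  rw [CD.IsPure] at ha1 ha2 hx1 hx2
  have key : CD.tilde a * x + CD.tilde x * a
      = (((0 : CD n), (2 * CD.inner a x) • (1 : CD n)) : CD n × CD n) := by
    show ((CD.mul (-a.2) x.1 - CD.mul (CD.conj x.2) a.1
          + (CD.mul (-x.2) a.1 - CD.mul (CD.conj a.2) x.1),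
        CD.mul x.2 (-a.2) + CD.mul a.1 (CD.conj x.1)
          + (CD.mul a.2 (-x.2) + CD.mul x.1 (CD.conj a.1))) : CD n × CD n) = _
    rw [Prod.mk.injEq]
    constructor
    · rw [hx2, ha2, (CDAux.mul_negs a.2 x.1).1, (CDAux.mul_negs x.2 a.1).1]
      abel
    · rw [← ha2, ← hx2]
      have hre : CD.mul x.2 (CD.conj a.2) + CD.mul a.1 (CD.conj x.1)
          + (CD.mul a.2 (CD.conj x.2) + CD.mul x.1 (CD.conj a.1))
          = (CD.mul x.2 (CD.conj a.2) + CD.mul a.2 (CD.conj x.2))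
            + (CD.mul a.1 (CD.conj x.1) + CD.mul x.1 (CD.conj a.1)) := by abel
      rw [hre, CDAux.mul_conj_add, CDAux.mul_conj_add, ← add_smul]
      show _ = (2 * (CD.inner a.1 x.1 + CD.inner a.2 x.2)) • (1 : CD n)
      rw [CDAux.inner_comm x.2]
      congr 1
      ring
  rw [key]
  show (((0 : CD n), (2 * CD.inner a x) • (1 : CD n)) : CD n × CD n) = (0, 0) ↔ _
  rw [Prod.mk.injEq, CDAux.smul_one_eq_zero_iff]
  constructor
  · rintro ⟨-, h⟩
    linarith
  · intro h
    exact ⟨rfl, by rw [h]; ring⟩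
end
end
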